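/- Let 0 < δ < 1 and let n ≥ 2 be even. Consider one iteration of the modified SEMO or modified GSEMO maximizing COCZ, let ℓ be the maximum g₁-value in the current population P⁽ᵗ⁾, and let Z_t be the number of individuals in P⁽ᵗ⁾ with g₁-value ℓ. If 1 ≤ Z_t < δn/2, then the probability that the number of individuals with g₁-value ℓ in the next population equals Z_t + 1 is at least (1/(n/2+1)) · (1−δ)/(4e). -/

import Mathlib

open scoped ENNReal

namespace GSEMOPaper

attribute [local instance] Classical.propDecidable

/-- An individual (bit string) of length `n`. -/
abbrev Individual (n : ℕ) := Fin n → Bool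

/-- `u` weakly dominates `v` (maximization, two objectives). -/
def weaklyDom (u v : ℝ × ℝ) : Prop := v.1 ≤ u.1 ∧ v.2 ≤ u.2

/-- `u` strictly dominates `v`. -/
def strictlyDom (u v : ℝ × ℝ) : Prop := weaklyDom u v ∧ u ≠ v

/-- The Pareto front of a bi-objective function on bit strings. -/
def paretoFront {n : ℕ} (f : Individual n → ℝ × ℝ) : Set (ℝ × ℝ) :=
  {u | ∃ x : Individual n, f x = u ∧ ∀ y : Individual n, ¬ strictlyDom (f y) (f x)}

/-- The objective values of the population `P` cover the Pareto front of `f`. -/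
def covers {n : ℕ} (f : Individual n → ℝ × ℝ) (P : Finset (Individual n)) : Prop :=
  paretoFront f ⊆ f '' (P : Set (Individual n))

/-- A valid (G)SEMO population: distinct members are mutually non-dominated
(in particular they have pairwise distinct objective values). -/
def validPop {n : ℕ} (f : Individual n → ℝ × ℝ) (P : Finset (Individual n)) : Prop :=
  ∀ x ∈ P, ∀ y ∈ P, x ≠ y → ¬ weaklyDom (f x) (f y)

/-- Survival selection of the (G)SEMO: remove all individuals weakly dominated by the
offspring `y`, then insert `y` unless it is strictly dominated by a remaining individual. -/
noncomputable def updatePop {n : ℕ} (f : Individual n → ℝ × ℝ)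
    (P : Finset (Individual n)) (y : Individual n) : Finset (Individual n) :=
  let Q := P.filter fun z => ¬ weaklyDom (f y) (f z)
  if ∃ z ∈ Q, strictlyDom (f z) (f y) then Q else insert y Q

/-- Flip position `i` of `x`. -/
def flipOne {n : ℕ} (x : Individual n) (i : Fin n) : Individual n :=
  Function.update x i (!x i)

/-- One-bit mutation (SEMO): flip exactly one uniformly random position. -/
noncomputable def oneBitMut {n : ℕ} (x : Individual n) : PMF (Individual n) :=
  if h : n = 0 then PMF.pure x
  else
    haveI : Nonempty (Fin n) := ⟨⟨0, Nat.pos_of_ne_zero h⟩⟩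
    (PMF.uniformOfFintype (Fin n)).map (flipOne x)

/-- A vector of `m` independent Bernoulli(`p`) bits. -/
noncomputable def bernoulliVec (p : ℝ≥0∞) (hp : p ≤ 1) : (m : ℕ) → PMF (Fin m → Bool)
  | 0 => PMF.pure fun i => i.elim0
  | m + 1 => (PMF.ofFintype (fun b => cond b p (1 - p)) (by simp [Fintype.sum_bool, add_tsub_cancel_of_le hp])).bind fun b => (bernoulliVec p hp m).map fun v => Fin.cons b v

/-- Standard bit mutation (GSEMO): flip each position independently with probability `1/n`. -/
noncomputable def stdBitMut {n : ℕ} (x : Individual n) : PMF (Individual n) :=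
  if h : n = 0 then PMF.pure x
  else
    (bernoulliVec ((n : ℝ≥0∞))⁻¹
        (ENNReal.inv_le_one.mpr (by exact_mod_cast Nat.one_le_iff_ne_zero.mpr h)) n).map
      fun mask => fun j => if mask j then !x j else x j

/-- One iteration of the (G)SEMO maximizing `f`, with mutation operator `mutOp`:
choose a parent uniformly at random from the population, mutate it, and perform
survival selection. -/
noncomputable def semoStep {n : ℕ} (f : Individual n → ℝ × ℝ)
    (mutOp : Individual n → PMF (Individual n))
    (P : Finset (Individual n)) : PMF (Finset (Individual n)) :=
  if h : P.Nonempty then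
    (PMF.uniformOfFinset P h).bind fun x => (mutOp x).map fun y => updatePop f P y
  else PMF.pure P

/-- One iteration of the modified (G)SEMO: choose `i ∈ {0, …, m}` uniformly at random;
if the population contains no individual `z` with `idx z = i`, nothing happens;
otherwise the (unique) such individual is the parent. -/
noncomputable def modStep {n : ℕ} (f : Individual n → ℝ × ℝ)
    (mutOp : Individual n → PMF (Individual n))
    (idx : Individual n → ℕ) (m : ℕ)
    (P : Finset (Individual n)) : PMF (Finset (Individual n)) :=
  (PMF.uniformOfFintype (Fin (m + 1))).bind fun i =>
    let S := P.filter fun z => idx z = (i : ℕ)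
    if h : S.Nonempty then
      (PMF.uniformOfFinset S h).bind fun x => (mutOp x).map fun y => updatePop f P y
    else PMF.pure P

/-- Distribution of the trajectory (list of states, most recent first) of `t` iterations of
the Markov chain with one-step kernel `step`, started in state `s`. The resulting lists
have length `t + 1` and record the states `P⁽ᵗ⁾, …, P⁽⁰⁾`. -/
noncomputable def run {σ : Type*} [Inhabited σ] (step : σ → PMF σ) (s : σ) : ℕ → PMF (List σ)
  | 0 => PMF.pure [s]
  | t + 1 => (run step s t).bind fun l => (step l.headI).map fun s' => s' :: l

/-- The probability that a sample from `p` lies in the event `E`. -/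
noncomputable def prob {α : Type*} (p : PMF α) (E : Set α) : ℝ≥0∞ := p.toOuterMeasure E

/-- The uniform distribution on `{0,1}ⁿ` used for initialization. -/
noncomputable def uniformInit (n : ℕ) : PMF (Individual n) :=
  PMF.uniformOfFintype (Individual n)

/-- The number of ones of a bit string. -/
def ones {n : ℕ} (x : Individual n) : ℕ :=
  (Finset.univ.filter fun i : Fin n => x i = true).card

/-- The number of zeros of a bit string. -/
def zeros {n : ℕ} (x : Individual n) : ℕ :=
  (Finset.univ.filter fun i : Fin n => x i = false).card

/-- `g₁ x`: the number of ones in the first half (positions `0, …, n/2 - 1`). -/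
def g1 {n : ℕ} (x : Individual n) : ℕ :=
  (Finset.univ.filter fun i : Fin n => (i : ℕ) < n / 2 ∧ x i = true).card

/-- `g₂ x`: the number of ones in the second half (positions `n/2, …, n - 1`). -/
def g2 {n : ℕ} (x : Individual n) : ℕ :=
  (Finset.univ.filter fun i : Fin n => n / 2 ≤ (i : ℕ) ∧ x i = true).card

/-- The COCZ benchmark: `COCZ(x) = (g₁(x) + g₂(x), g₁(x) + n/2 − g₂(x))`. -/
noncomputable def cocz {n : ℕ} (x : Individual n) : ℝ × ℝ :=
  (((g1 x + g2 x : ℕ) : ℝ), (g1 x : ℝ) + (n : ℝ) / 2 - (g2 x : ℝ))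

/-- The OneMinMax benchmark: `OMM(x) = (|x|₁, n − |x|₁)`. -/
noncomputable def omm {n : ℕ} (x : Individual n) : ℝ × ℝ :=
  ((ones x : ℝ), (n : ℝ) - (ones x : ℝ))

/-- The OJZJ benchmark with gap parameter `k`. -/
noncomputable def ojzj (n k : ℕ) (x : Individual n) : ℝ × ℝ :=
  ((if ones x ≤ n - k ∨ x = fun _ => true then ((k + ones x : ℕ) : ℝ)
      else ((n - ones x : ℕ) : ℝ)),
   (if zeros x ≤ n - k ∨ x = fun _ => false then ((k + zeros x : ℕ) : ℝ)
      else ((n - zeros x : ℕ) : ℝ)))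

/-!
On a valid population `g₂` is injective, so the `Z` individuals on the top level `ℓ` have a set
`G` of `Z` distinct `g₂`-values. Take a maximal run `[a, b] ⊆ G`. Flipping one of the `a` ones in
the second half of the individual with `g₂ = a`, or one of the `n/2 - b` zeros in the second half
of the individual with `g₂ = b`, creates an offspring on level `ℓ` whose `g₂`-value lies outside
`G`: nothing in the population dominates it and it dominates nobody on level `ℓ`, so the level
grows by one. As `b + 1 - a ≤ Z`, there are at least `n/2 + 1 - Z > (1 - δ) n/2` such flips; each
parent is selected with probability `1/(n/2 + 1)` and each one-bit flip occurs with probability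
at least `1/(en)`.
-/

open Finset

theorem _root_.PMF.map_apply_of_injective {α β : Type*} (p : PMF α) {f : α → β}
    (hf : Function.Injective f) (a : α) : p.map f (f a) = p a := by
  rw [PMF.map_apply, tsum_eq_single a fun a' ha' => if_neg fun h => ha' (hf h).symm, if_pos rfl]

theorem _root_.PMF.uniformOfFinset_singleton {α : Type*} (a : α) :
    PMF.uniformOfFinset {a} (singleton_nonempty a) = PMF.pure a := by
  ext b
  by_cases h : b = a <;> simp [PMF.uniformOfFinset_apply, h]

section Mutation

variable {n : ℕ}

theorem flipOne_injective (x : Individual n) : Function.Injective (flipOne x) := by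
  intro i j h
  by_contra hij
  have := congrFun h i
  simp [flipOne, Function.update_of_ne hij] at this

theorem oneBitMut_flipOne (hn : n ≠ 0) (x : Individual n) (j : Fin n) :
    oneBitMut x (flipOne x j) = (n : ℝ≥0∞)⁻¹ := by
  have : Nonempty (Fin n) := ⟨⟨0, Nat.pos_of_ne_zero hn⟩⟩
  rw [oneBitMut, dif_neg hn, PMF.map_apply_of_injective _ (flipOne_injective x),
    PMF.uniformOfFintype_apply, Fintype.card_fin]

theorem bernoulliVec_cons (p : ℝ≥0∞) (hp : p ≤ 1) (m : ℕ) (b : Bool) (v : Fin m → Bool) :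
    bernoulliVec p hp (m + 1) (Fin.cons b v) = cond b p (1 - p) * bernoulliVec p hp m v := by
  rw [bernoulliVec, PMF.bind_apply, tsum_bool]
  cases b <;> simp [PMF.map_apply, Fin.cons_inj]

theorem bernoulliVec_apply (p : ℝ≥0∞) (hp : p ≤ 1) :
    ∀ (m : ℕ) (v : Fin m → Bool), bernoulliVec p hp m v = ∏ i, cond (v i) p (1 - p)
  | 0, v => by simp [bernoulliVec, Subsingleton.elim v (fun i => i.elim0)]
  | m + 1, v => by
    rw [← Fin.cons_self_tail v, bernoulliVec_cons, bernoulliVec_apply p hp m, Fin.prod_univ_succ]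
    simp [Fin.tail]

theorem stdBitMut_flipOne (hn : n ≠ 0) (x : Individual n) (j : Fin n) :
    stdBitMut x (flipOne x j) = (n : ℝ≥0∞)⁻¹ * (1 - (n : ℝ≥0∞)⁻¹) ^ (n - 1) := by
  have hmask : (fun mask : Fin n → Bool => fun i => if mask i then !x i else x i)
      (fun i => decide (i = j)) = flipOne x j := by
    funext i
    by_cases hij : i = j
    · subst hij; simp [flipOne]
    · simp [flipOne, hij]
  have hinj : Function.Injective
      fun mask : Fin n → Bool => fun i => if mask i then !x i else x i := by
    intro m₁ m₂ h
    funext i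
    have := congrFun h i
    cases h₁ : m₁ i <;> cases h₂ : m₂ i <;> simp [h₁, h₂] at this ⊢
  have hrest : ∏ i ∈ univ.erase j, cond (decide (i = j)) (n : ℝ≥0∞)⁻¹ (1 - (n : ℝ≥0∞)⁻¹)
      = (1 - (n : ℝ≥0∞)⁻¹) ^ (n - 1) := by
    rw [prod_congr (g := fun _ => 1 - (n : ℝ≥0∞)⁻¹) rfl fun i hi => by
        simp [ne_of_mem_erase hi], prod_const,
      card_erase_of_mem (mem_univ j), card_univ, Fintype.card_fin]
  rw [stdBitMut, dif_neg hn, ← hmask, PMF.map_apply_of_injective _ hinj, bernoulliVec_apply,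
    ← mul_prod_erase univ _ (mem_univ j), hrest]
  simp

theorem inv_exp_one_le_one_sub_inv_pow (hn : n ≠ 0) :
    (Real.exp 1)⁻¹ ≤ (1 - (n : ℝ)⁻¹) ^ (n - 1) := by
  obtain ⟨k, rfl⟩ := Nat.exists_eq_succ_of_ne_zero hn
  rcases k.eq_zero_or_pos with rfl | hk
  · simpa using inv_le_one_of_one_le₀ (Real.one_le_exp zero_le_one)
  have hsub : 1 - ((k + 1 : ℕ) : ℝ)⁻¹ = (1 + (k : ℝ)⁻¹)⁻¹ := by
    field_simp; push_cast; ring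
  rw [hsub, Nat.succ_sub_one, inv_pow]
  exact inv_anti₀ (by positivity) Real.one_add_inv_pow_le_exp

theorem ofReal_inv_exp_mul_le_mut_flipOne (hn : n ≠ 0)
    {mutOp : Individual n → PMF (Individual n)} (hmut : mutOp = oneBitMut ∨ mutOp = stdBitMut)
    (x : Individual n) (j : Fin n) :
    ENNReal.ofReal (Real.exp 1 * n)⁻¹ ≤ mutOp x (flipOne x j) := by
  have hn' : (0 : ℝ) < n := Nat.cast_pos.2 (Nat.pos_of_ne_zero hn)
  have hinv : (n : ℝ)⁻¹ ≤ 1 :=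
    inv_le_one_of_one_le₀ (Nat.one_le_cast.2 (Nat.one_le_iff_ne_zero.2 hn))
  have hstd : ENNReal.ofReal ((n : ℝ)⁻¹ * (1 - (n : ℝ)⁻¹) ^ (n - 1)) =
      stdBitMut x (flipOne x j) := by
    rw [stdBitMut_flipOne hn, ENNReal.ofReal_mul (by positivity),
      ENNReal.ofReal_pow (sub_nonneg.2 hinv), ENNReal.ofReal_sub _ (by positivity),
      ENNReal.ofReal_one, ENNReal.ofReal_inv_of_pos hn', ENNReal.ofReal_natCast]
  have hle : ENNReal.ofReal (Real.exp 1 * n)⁻¹ ≤ stdBitMut x (flipOne x j) := by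
    rw [← hstd, mul_inv, mul_comm]
    gcongr
    exact inv_exp_one_le_one_sub_inv_pow hn
  rcases hmut with rfl | rfl
  · refine hle.trans ?_
    rw [← hstd, oneBitMut_flipOne hn, ← ENNReal.ofReal_natCast, ← ENNReal.ofReal_inv_of_pos hn']
    gcongr
    exact mul_le_of_le_one_right (by positivity)
      (pow_le_one₀ (sub_nonneg.2 hinv) (sub_le_self _ (by positivity)))
  · exact hle

end Mutation

theorem card_mul_le_prob_map {α β : Type*} (p : PMF α) (g : α → β) (E : Set β) (S : Finset α)
    (q : ℝ≥0∞) (hq : ∀ a ∈ S, q ≤ p a) (hS : ∀ a ∈ S, g a ∈ E) :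
    #S * q ≤ prob (p.map g) E :=
  calc #S * q = ∑ a ∈ S, q := by rw [sum_const, nsmul_eq_mul]
    _ ≤ ∑ a ∈ S, p a := sum_le_sum hq
    _ = p.toOuterMeasure S := (p.toOuterMeasure_apply_finset S).symm
    _ ≤ p.toOuterMeasure (g ⁻¹' E) := p.toOuterMeasure.mono fun a ha => hS a ha
    _ = prob (p.map g) E := (p.toOuterMeasure_map_apply g E).symm

section ModStep

variable {n : ℕ} (f : Individual n → ℝ × ℝ) (mutOp : Individual n → PMF (Individual n))
  (idx : Individual n → ℕ) (m : ℕ) (P : Finset (Individual n))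

theorem sum_mul_prob_le_prob_modStep (hinj : Set.InjOn idx P) (hidx : ∀ x ∈ P, idx x ≤ m)
    (E : Set (Finset (Individual n))) :
    ∑ x ∈ P, ((m + 1 : ℕ) : ℝ≥0∞)⁻¹ * prob ((mutOp x).map (updatePop f P)) E ≤
      prob (modStep f mutOp idx m P) E := by
  set φ : Individual n → Fin (m + 1) := fun x => Fin.ofNat (m + 1) (idx x)
  have hφ : ∀ x ∈ P, (φ x : ℕ) = idx x := fun x hx =>
    (Fin.val_ofNat _ _).trans (Nat.mod_eq_of_lt (Nat.lt_succ_of_le (hidx x hx)))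
  have hfiber : ∀ x ∈ P, P.filter (fun z => idx z = φ x) = {x} := by
    intro x hx
    ext z
    simp only [mem_filter, mem_singleton, hφ x hx]
    exact ⟨fun ⟨hz, h⟩ => hinj hz hx h, by rintro rfl; exact ⟨hx, rfl⟩⟩
  rw [prob, modStep, PMF.toOuterMeasure_bind_apply]
  refine le_trans (le_of_eq ?_) (ENNReal.sum_le_tsum (P.image φ))
  rw [sum_image fun x hx y hy h => hinj hx hy (by rw [← hφ x hx, ← hφ y hy, h])]
  refine sum_congr rfl fun x hx => ?_
  simp only [PMF.uniformOfFintype_apply, Fintype.card_fin]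
  rw [hfiber x hx, dif_pos (singleton_nonempty x), PMF.uniformOfFinset_singleton, PMF.pure_bind,
    prob]

theorem sum_card_mul_le_prob_modStep {q : ℝ≥0∞} (hq : ∀ x j, q ≤ mutOp x (flipOne x j))
    (hinj : Set.InjOn idx P) (hidx : ∀ x ∈ P, idx x ≤ m) {E : Set (Finset (Individual n))}
    (J : Individual n → Finset (Fin n)) (hJ : ∀ x, ∀ j ∈ J x, updatePop f P (flipOne x j) ∈ E) :
    ((m + 1 : ℕ) : ℝ≥0∞)⁻¹ * ((∑ x ∈ P, #(J x) : ℕ) * q) ≤ prob (modStep f mutOp idx m P) E := by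
  refine le_trans ?_ (sum_mul_prob_le_prob_modStep f mutOp idx m P hinj hidx E)
  rw [Nat.cast_sum, sum_mul, mul_sum]
  refine sum_le_sum fun x _ => ?_
  gcongr
  rw [← card_image_of_injective _ (flipOne_injective x)]
  refine card_mul_le_prob_map _ _ E _ q ?_ ?_ <;>
    simp only [mem_image, forall_exists_index, and_imp]
  · rintro _ j - rfl; exact hq x j
  · rintro _ j hj rfl; exact hJ x j hj

end ModStep

theorem exists_maximal_Icc_subset (G : Finset ℕ) (hG : G.Nonempty) :
    ∃ a b, a ≤ b ∧ Icc a b ⊆ G ∧ b + 1 ∉ G ∧ ∀ c ∈ G, c + 1 ≠ a := by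
  set b := G.max' hG
  have hex : ∃ a, Icc a b ⊆ G := ⟨b, by simp [b, G.max'_mem hG]⟩
  refine ⟨Nat.find hex, b, Nat.find_min' hex (by simp [b, G.max'_mem hG]), Nat.find_spec hex,
    fun h => Nat.not_succ_le_self b (G.le_max' _ h), fun c hc hca => ?_⟩
  refine Nat.find_min hex (m := c) (by omega) fun d hd => ?_
  rcases (mem_Icc.1 hd).1.eq_or_lt with rfl | hlt
  · exact hc
  · exact Nat.find_spec hex (mem_Icc.2 ⟨by omega, (mem_Icc.1 hd).2⟩)

section COCZ

variable {n : ℕ}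

theorem weaklyDom_cocz_iff (u v : Individual n) :
    weaklyDom (cocz u) (cocz v) ↔ g1 v + g2 v ≤ g1 u + g2 u ∧ g1 v + g2 u ≤ g1 u + g2 v := by
  have h₂ : (g1 v : ℝ) + n / 2 - g2 v ≤ g1 u + n / 2 - g2 u ↔ g1 v + g2 u ≤ g1 u + g2 v := by
    rw [← Nat.cast_le (α := ℝ)]
    push_cast
    constructor <;> intro h <;> linarith
  simp only [weaklyDom, cocz, Nat.cast_le, h₂]

theorem validPop.injOn_g2 {P : Finset (Individual n)} (h : validPop cocz P) :
    Set.InjOn g2 (P : Set (Individual n)) := by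
  intro x hx y hy hxy
  by_contra hne
  rcases le_total (g1 x) (g1 y) with hle | hle
  · exact h y hy x hx (Ne.symm hne) ((weaklyDom_cocz_iff y x).2 (by omega))
  · exact h x hx y hy hne ((weaklyDom_cocz_iff x y).2 (by omega))

theorem card_filter_updatePop_of_new_g2 {P : Finset (Individual n)} {ℓ : ℕ}
    (hmax : ∀ z ∈ P, g1 z ≤ ℓ) {y : Individual n} (hy : g1 y = ℓ)
    (hnew : ∀ z ∈ P, g1 z = ℓ → g2 z ≠ g2 y) :
    #((updatePop cocz P y).filter fun z => g1 z = ℓ) = #(P.filter fun z => g1 z = ℓ) + 1 := by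
  have hundominated : ∀ z ∈ P, ¬ weaklyDom (cocz z) (cocz y) := fun z hz hdom => by
    have := (weaklyDom_cocz_iff z y).1 hdom
    exact hnew z hz (by have := hmax z hz; omega) (by have := hmax z hz; omega)
  have hsurvives : ∀ z ∈ P, g1 z = ℓ → ¬ weaklyDom (cocz y) (cocz z) := fun z hz hz1 hdom => by
    have := (weaklyDom_cocz_iff y z).1 hdom
    exact hnew z hz hz1 (by omega)
  have hupdate : updatePop cocz P y = insert y (P.filter fun z => ¬ weaklyDom (cocz y) (cocz z)) :=
    if_neg fun ⟨z, hz, hdom⟩ => hundominated z (mem_filter.1 hz).1 hdom.1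
  rw [hupdate, filter_insert, if_pos hy, filter_filter, card_insert_of_notMem]
  · congr 2
    exact filter_congr fun z hz => ⟨And.right, fun hz1 => ⟨hsurvives z hz hz1, hz1⟩⟩
  · exact fun hmem => hnew y (mem_filter.1 hmem).1 hy rfl

theorem flipOne_flipOne (x : Individual n) (j : Fin n) : flipOne (flipOne x j) j = x := by
  simp [flipOne]

theorem g1_flipOne {x : Individual n} {j : Fin n} (hj : n / 2 ≤ j) :
    g1 (flipOne x j) = g1 x := by
  refine congrArg card (filter_congr fun i _ => ?_)
  by_cases hij : i = j
  · subst hij; omega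
  · simp [flipOne, hij]

theorem g2_flipOne_of_false {x : Individual n} {j : Fin n} (hj : n / 2 ≤ j) (hx : x j = false) :
    g2 (flipOne x j) = g2 x + 1 := by
  have hset : (univ.filter fun i : Fin n => n / 2 ≤ (i : ℕ) ∧ flipOne x j i = true) =
      insert j (univ.filter fun i : Fin n => n / 2 ≤ (i : ℕ) ∧ x i = true) := by
    ext i
    by_cases hij : i = j
    · subst hij; simp [flipOne, hx, hj]
    · rw [mem_insert, mem_filter, mem_filter, flipOne, Function.update_of_ne hij]
      simp [hij]
  rw [g2, g2, hset, card_insert_of_notMem (by simp [hx])]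

theorem g2_flipOne_of_true {x : Individual n} {j : Fin n} (hj : n / 2 ≤ j) (hx : x j = true) :
    g2 (flipOne x j) + 1 = g2 x := by
  simpa [flipOne_flipOne] using
    (g2_flipOne_of_false (x := flipOne x j) hj (by simp [flipOne, hx])).symm

theorem g2_add_card_zeros (hn : Even n) (x : Individual n) :
    g2 x + #(univ.filter fun i : Fin n => n / 2 ≤ (i : ℕ) ∧ x i = false) = n / 2 := by
  have hhalf : #(univ.filter fun i : Fin n => n / 2 ≤ (i : ℕ)) = n / 2 := by
    have := card_filter_add_card_filter_not (s := univ) fun i : Fin n => (i : ℕ) < n / 2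
    simp only [Fin.card_filter_val_lt, card_univ, Fintype.card_fin, not_lt] at this
    obtain ⟨k, rfl⟩ := hn
    omega
  have hsplit := card_filter_add_card_filter_not
    (s := univ.filter fun i : Fin n => n / 2 ≤ (i : ℕ)) fun i => x i = true
  simp only [filter_filter, Bool.not_eq_true] at hsplit
  rw [g2]
  omega

theorem g2_le_half (hn : Even n) (x : Individual n) : g2 x ≤ n / 2 :=
  g2_add_card_zeros hn x ▸ Nat.le_add_right _ _

noncomputable def improvingFlips (P : Finset (Individual n)) (ℓ : ℕ) (x : Individual n) :
    Finset (Fin n) :=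
  univ.filter fun j => #((updatePop cocz P (flipOne x j)).filter fun z => g1 z = ℓ) =
    #(P.filter fun z => g1 z = ℓ) + 1

theorem le_card_add_sum_card_improvingFlips (hn : Even n) {P : Finset (Individual n)}
    (hvalid : validPop cocz P) {ℓ : ℕ} (hmax : ∀ z ∈ P, g1 z ≤ ℓ)
    (hL : (P.filter fun z => g1 z = ℓ).Nonempty) :
    n / 2 + 1 ≤ #(P.filter fun z => g1 z = ℓ) + ∑ x ∈ P, #(improvingFlips P ℓ x) := by
  set L := P.filter fun z => g1 z = ℓ
  set G := L.image g2
  have himp : ∀ x ∈ L, ∀ j : Fin n, n / 2 ≤ j → g2 (flipOne x j) ∉ G →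
      j ∈ improvingFlips P ℓ x :=
    fun x hx j hj hnew => mem_filter.2 ⟨mem_univ j,
      card_filter_updatePop_of_new_g2 hmax (by rw [g1_flipOne hj, (mem_filter.1 hx).2])
        fun z hz hz1 h => hnew (h ▸ mem_image_of_mem g2 (mem_filter.2 ⟨hz, hz1⟩))⟩
  obtain ⟨a, b, hab, hIcc, hb, ha⟩ := exists_maximal_Icc_subset G (hL.image g2)
  obtain ⟨xa, hxa, rfl⟩ := mem_image.1 (hIcc (left_mem_Icc.2 hab))
  obtain ⟨xb, hxb, rfl⟩ := mem_image.1 (hIcc (right_mem_Icc.2 hab))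
  have hrun : g2 xb + 1 - g2 xa ≤ #L := by
    have := card_le_card hIcc
    rwa [Nat.card_Icc, card_image_of_injOn (hvalid.injOn_g2.mono (filter_subset _ P))] at this
  have hones : g2 xa ≤ #((improvingFlips P ℓ xa).filter fun j => xa j = true) :=
    card_le_card fun j hj => by
      obtain ⟨hj, hxj⟩ := (mem_filter.1 hj).2
      exact mem_filter.2 ⟨himp xa hxa j hj fun h => ha _ h (g2_flipOne_of_true hj hxj), hxj⟩
  have hzeros : n / 2 - g2 xb ≤ #((improvingFlips P ℓ xb).filter fun j => ¬ xb j = true) := by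
    refine le_trans (b := #(univ.filter fun i : Fin n => n / 2 ≤ (i : ℕ) ∧ xb i = false))
      (by have := g2_add_card_zeros hn xb; omega) (card_le_card fun j hj => ?_)
    obtain ⟨hj, hxj⟩ := (mem_filter.1 hj).2
    exact mem_filter.2 ⟨himp xb hxb j hj (by rwa [g2_flipOne_of_false hj hxj]), by simp [hxj]⟩
  have hsplit : ∑ x ∈ P, #(improvingFlips P ℓ x) =
      ∑ x ∈ P, #((improvingFlips P ℓ x).filter fun j => x j = true) +
      ∑ x ∈ P, #((improvingFlips P ℓ x).filter fun j => ¬ x j = true) := by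
    rw [← sum_add_distrib]
    exact sum_congr rfl fun x _ => (card_filter_add_card_filter_not _).symm
  have := single_le_sum (f := fun x => #((improvingFlips P ℓ x).filter fun j => x j = true))
    (fun _ _ => Nat.zero_le _) (mem_filter.1 hxa).1
  have := single_le_sum (f := fun x => #((improvingFlips P ℓ x).filter fun j => ¬ x j = true))
    (fun _ _ => Nat.zero_le _) (mem_filter.1 hxb).1
  omega

end COCZ

theorem modified_gsemo_probability_to_spread_general
    (n : ℕ) (hn : Even n) (hn2 : 2 ≤ n) (δ : ℝ)
    (mutOp : Individual n → PMF (Individual n))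
    (hmut : mutOp = oneBitMut ∨ mutOp = stdBitMut)
    (P : Finset (Individual n)) (hvalid : validPop cocz P)
    (ℓ Z : ℕ) (hℓ : ℓ = P.sup g1) (hZ : Z = (P.filter fun x => g1 x = ℓ).card)
    (hZ1 : 1 ≤ Z) (hZδ : (Z : ℝ) < δ * n / 2) :
    ENNReal.ofReal (1 / ((n : ℝ) / 2 + 1) * ((1 - δ) / (4 * Real.exp 1))) ≤
      prob (modStep cocz mutOp g2 (n / 2) P)
        {Q | (Q.filter fun x => g1 x = ℓ).card = Z + 1} := by
  subst hZ
  have hmax : ∀ z ∈ P, g1 z ≤ ℓ := fun z hz => hℓ ▸ le_sup hz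
  have hcount := le_card_add_sum_card_improvingFlips hn hvalid hmax (card_pos.1 hZ1)
  refine le_trans ?_ (sum_card_mul_le_prob_modStep cocz mutOp g2 (n / 2) P
    (ofReal_inv_exp_mul_le_mut_flipOne (by omega) hmut) hvalid.injOn_g2
    (fun x _ => g2_le_half hn x) (improvingFlips P ℓ) fun x j hj => (mem_filter.1 hj).2)
  set S := ∑ x ∈ P, #(improvingFlips P ℓ x)
  have hhalf : (n : ℝ) / 2 = (n / 2 : ℕ) :=
    (Nat.cast_div (even_iff_two_dvd.1 hn) two_ne_zero).symm
  have hn0 : (0 : ℝ) < n := by exact_mod_cast (by omega : 0 < n)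
  have hS : (1 - δ) * n ≤ 4 * S := by
    have : (n : ℝ) / 2 + 1 ≤ #(P.filter fun x => g1 x = ℓ) + S := by
      rw [hhalf]; exact_mod_cast hcount
    linarith [(Nat.cast_nonneg S : (0 : ℝ) ≤ S)]
  rw [← ENNReal.ofReal_natCast, ← ENNReal.ofReal_inv_of_pos (by positivity),
    ← ENNReal.ofReal_natCast S, ← ENNReal.ofReal_mul (by positivity),
    ← ENNReal.ofReal_mul (by positivity), Nat.cast_succ, ← hhalf, one_div]
  refine ENNReal.ofReal_le_ofReal (mul_le_mul_of_nonneg_left ?_ (by positivity))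
  calc (1 - δ) / (4 * Real.exp 1) ≤ 4 * S / n / (4 * Real.exp 1) := by
        gcongr; rwa [le_div_iff₀ hn0]
    _ = S * (Real.exp 1 * n)⁻¹ := by field_simp

/-- one iteration of the modified SEMO/GSEMO maximizing COCZ. If `ℓ` is the
maximum `g₁`-value in the current population `P` and `Z` the number of individuals of `P`
with `g₁`-value `ℓ`, with `1 ≤ Z < δn/2`, then the probability that the next population has
exactly `Z + 1` individuals with `g₁`-value `ℓ` is at least `(1/(n/2+1))·(1−δ)/(4e)`. -/
theorem modified_gsemo_probability_to_spread
    (n : ℕ) (hn : Even n) (hn2 : 2 ≤ n) (δ : ℝ) (hδ0 : 0 < δ) (hδ1 : δ < 1)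
    (mutOp : Individual n → PMF (Individual n))
    (hmut : mutOp = oneBitMut ∨ mutOp = stdBitMut)
    (P : Finset (Individual n)) (hP : P.Nonempty) (hvalid : validPop cocz P)
    (ℓ Z : ℕ) (hℓ : ℓ = P.sup g1) (hZ : Z = (P.filter fun x => g1 x = ℓ).card)
    (hZ1 : 1 ≤ Z) (hZδ : (Z : ℝ) < δ * n / 2) :
    ENNReal.ofReal (1 / ((n : ℝ) / 2 + 1) * ((1 - δ) / (4 * Real.exp 1))) ≤
      prob (modStep cocz mutOp g2 (n / 2) P)
        {Q | (Q.filter fun x => g1 x = ℓ).card = Z + 1} :=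
  modified_gsemo_probability_to_spread_general n hn hn2 δ mutOp hmut P hvalid ℓ Z hℓ hZ hZ1 hZδ

end GSEMOPaper
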